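/- The compression capacity of the model (01;2,1;f) equals log_3 6. That is, the supremum, over all positive integers k and all admissible k-shot codes (φ1, φ2), of the rate k / max(⌈log|Im φ1| / 2⌉, ⌈log|Im φ2|⌉) equals log_3 6. -/

import Mathlib

/-!
Statement 8: The compression capacity of the model (01;2,1;f), where encoder 1 observes both
sources, encoder 2 observes only y, the channel capacities are C1 = 2 and C2 = 1, and the
target function is the binary arithmetic sum f(x,y) = x + y, equals log_3 6.
Encoders are maps with finite image; WLOG into ℕ.
-/

/-- The componentwise integer sum of two binary vectors. -/
def vsum {k : ℕ} (x y : Fin k → Fin 2) : Fin k → ℕ := fun i => (x i : ℕ) + (y i : ℕ)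

/-- The cardinality of the image of an encoding map defined on `A^k × A^k`. -/
def imCard1 {k : ℕ} (φ : (Fin k → Fin 2) × (Fin k → Fin 2) → ℕ) : ℕ :=
  (Finset.univ.image φ).card

/-- The cardinality of the image of an encoding map defined on `A^k`. -/
def imCard2 {k : ℕ} (φ : (Fin k → Fin 2) → ℕ) : ℕ := (Finset.univ.image φ).card

/-- Admissibility for the model (01;C1,C2;f): there is a decoder that recovers `x + y`
with zero error from the encoder outputs `φ1 (x, y)` and `φ2 y`. -/
def Admissible01 {k : ℕ} (φ1 : (Fin k → Fin 2) × (Fin k → Fin 2) → ℕ)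
    (φ2 : (Fin k → Fin 2) → ℕ) : Prop :=
  ∃ ψ : ℕ → ℕ → (Fin k → ℕ), ∀ x y : Fin k → Fin 2, ψ (φ1 (x, y)) (φ2 y) = vsum x y

/-- The rate of a k-shot code for (01;2,1;f): `k / max(⌈log|Im φ1| / 2⌉, ⌈log|Im φ2|⌉)`,
logarithms in base 2. -/
noncomputable def rate0121 {k : ℕ} (φ1 : (Fin k → Fin 2) × (Fin k → Fin 2) → ℕ)
    (φ2 : (Fin k → Fin 2) → ℕ) : ℝ :=
  (k : ℝ) /
    ((max ⌈Real.logb 2 (imCard1 φ1) / 2⌉ ⌈Real.logb 2 (imCard2 φ2)⌉ : ℤ) : ℝ)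


/-!
Converse. If a code uses `n` channel uses, some fibre `B` of `φ2` has `|B| ≥ 2 ^ (k - n)`, and
the decoder with its second input fixed maps `Im φ1` onto `A^k + B` (`cubeSumset B`), so
`|A^k + B| ≤ 4 ^ n`. Splitting `B` along the first coordinate and using the concavity of
`t ↦ t ^ γ` with `γ = log₂ (3 / 2)` (`sumsetExp`) gives `|A^k + B| ≥ 2 ^ k |B| ^ γ`. Hence
`k + (k - n) γ ≤ 2 n`, that is `k / n ≤ log₃ 6`.

Achievability. If `3 ^ l ≤ 2 ^ n`, encoder 2 sends the first `n` bits of `y` and encoder 1 the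
first `n` bits of `x` together with the last `l` (ternary) coordinates of `x + y`, at most
`2 ^ n 3 ^ l ≤ 4 ^ n` values; this code has rate `(n + l) / n`, and `l = ⌊log₃ 2 ^ n⌋` makes it
exceed `log₃ 6 - 1 / n`.
-/

open Real Finset

noncomputable def sumsetExp : ℝ := logb 2 3 - 1

lemma two_rpow_sumsetExp : (2 : ℝ) ^ sumsetExp = 3 / 2 := by
  rw [sumsetExp, rpow_sub two_pos, rpow_logb two_pos (by norm_num) three_pos, rpow_one]

lemma sumsetExp_pos : 0 < sumsetExp := by
  have : 1 < logb 2 3 := by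
    rw [lt_logb_iff_rpow_lt one_lt_two three_pos]; norm_num
  rw [sumsetExp]; linarith

lemma sumsetExp_le_one : sumsetExp ≤ 1 := by
  have : logb 2 3 ≤ 2 := by
    rw [logb_le_iff_le_rpow one_lt_two three_pos]; norm_num
  rw [sumsetExp]; linarith

/-- Write `y` and `x` as convex combinations of `a = (x + y) / 2` with `0` and with `x + y`, and
use the concavity of `t ↦ t ^ sumsetExp`; since `2 ^ sumsetExp = 3 / 2`, the two bounds add up
exactly to the claim. -/
lemma two_mul_add_rpow_le {x y : ℝ} (hy : 0 ≤ y) (hyx : y ≤ x) :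
    2 * (x + y) ^ sumsetExp ≤ 2 * x ^ sumsetExp + y ^ sumsetExp := by
  rcases hy.eq_or_lt with rfl | hy
  · simp [zero_rpow sumsetExp_pos.ne']
  set a := (x + y) / 2
  have ha : 0 < a := by simp only [a]; linarith
  set θ := y / a
  have hθa : θ * a = y := div_mul_cancel₀ y ha.ne'
  have hsum : x + y = 2 * a := by simp only [a]; ring
  have hθ0 : 0 ≤ θ := by positivity
  have hθ1 : θ ≤ 1 := (div_le_one ha).2 (by simp only [a]; linarith)
  have hconc := concaveOn_rpow sumsetExp_pos.le sumsetExp_le_one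
  have hy' : θ * a ^ sumsetExp ≤ y ^ sumsetExp := by
    have := hconc.2 (Set.mem_Ici.2 ha.le) (Set.mem_Ici.2 le_rfl) hθ0 (sub_nonneg.2 hθ1)
      (add_sub_cancel θ 1)
    simpa [zero_rpow sumsetExp_pos.ne', hθa] using this
  have hx' : θ * a ^ sumsetExp + (1 - θ) * (x + y) ^ sumsetExp ≤ x ^ sumsetExp := by
    have := hconc.2 (Set.mem_Ici.2 ha.le) (Set.mem_Ici.2 (by linarith : 0 ≤ x + y)) hθ0
      (sub_nonneg.2 hθ1) (add_sub_cancel θ 1)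
    have hx : θ * a + (1 - θ) * (x + y) = x := by linear_combination (-1) * hθa - θ * hsum
    simpa only [smul_eq_mul, hx] using this
  have ha' : 3 * a ^ sumsetExp = 2 * (x + y) ^ sumsetExp := by
    rw [div_rpow (by linarith) zero_le_two, two_rpow_sumsetExp]
    ring
  linear_combination 2 * hx' + hy' - θ * ha'

lemma two_mul_add_rpow_le_add_max {x y : ℝ} (hx : 0 ≤ x) (hy : 0 ≤ y) :
    2 * (x + y) ^ sumsetExp ≤
      x ^ sumsetExp + max (x ^ sumsetExp) (y ^ sumsetExp) + y ^ sumsetExp := by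
  rcases le_total y x with h | h
  · linarith [two_mul_add_rpow_le hy h, le_max_left (x ^ sumsetExp) (y ^ sumsetExp)]
  · have := two_mul_add_rpow_le hx h
    rw [add_comm y x] at this
    linarith [le_max_right (x ^ sumsetExp) (y ^ sumsetExp)]

section Sumset

variable {k : ℕ}

def cubeSumset (B : Finset (Fin k → Fin 2)) : Finset (Fin k → ℕ) :=
  (univ ×ˢ B).image fun p => vsum p.1 p.2

lemma mem_cubeSumset {B : Finset (Fin k → Fin 2)} {z : Fin k → ℕ} :
    z ∈ cubeSumset B ↔ ∃ x, ∃ y ∈ B, vsum x y = z := by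
  simp [cubeSumset]

lemma card_le_card_cubeSumset (B : Finset (Fin k → Fin 2)) : #B ≤ #(cubeSumset B) := by
  refine card_le_card_of_injOn (vsum 0) (fun y hy => mem_cubeSumset.2 ⟨0, y, hy, rfl⟩) ?_
  intro y _ y' _ h
  funext i
  simpa [vsum, Fin.val_inj] using congrFun h i

lemma vsum_cons (a b : Fin 2) (x y : Fin k → Fin 2) :
    vsum (Fin.cons a x : Fin (k + 1) → Fin 2) (Fin.cons b y) =
      Fin.cons ((a : ℕ) + b) (vsum x y) := by
  funext i
  refine Fin.cases ?_ (fun _ => ?_) i <;> simp [vsum]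

def headSlice (B : Finset (Fin (k + 1) → Fin 2)) (a : Fin 2) : Finset (Fin k → Fin 2) :=
  {v | Fin.cons a v ∈ B}

lemma card_headSlice (B : Finset (Fin (k + 1) → Fin 2)) (a : Fin 2) :
    #(headSlice B a) = #{w ∈ B | w 0 = a} := by
  refine card_nbij (Fin.cons (α := fun _ => Fin 2) a) (fun v hv => ?_)
    (Fin.cons_right_injective (α := fun _ => Fin 2) a).injOn (fun w hw => ?_)
  · simpa [headSlice] using hv
  · simp only [coe_filter, Set.mem_ofPred_eq] at hw
    refine ⟨Fin.tail w, by simp [headSlice, ← hw.2, hw.1], ?_⟩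
    simp [← hw.2]

lemma card_eq_card_headSlice_add (B : Finset (Fin (k + 1) → Fin 2)) :
    #B = #(headSlice B 0) + #(headSlice B 1) := by
  rw [card_headSlice, card_headSlice, card_eq_sum_card_fiberwise (fun w _ => mem_univ (w 0)),
    Fin.sum_univ_two]

lemma cons_mem_cubeSumset {B : Finset (Fin (k + 1) → Fin 2)} (a b : Fin 2) {z : Fin k → ℕ}
    (hz : z ∈ cubeSumset (headSlice B b)) :
    (Fin.cons ((a : ℕ) + b) z : Fin (k + 1) → ℕ) ∈ cubeSumset B := by
  obtain ⟨x, y, hy, rfl⟩ := mem_cubeSumset.1 hz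
  exact mem_cubeSumset.2
    ⟨Fin.cons a x, Fin.cons b y, by simpa [headSlice] using hy, vsum_cons a b x y⟩

lemma card_cubeSumset_headSlice_le (B : Finset (Fin (k + 1) → Fin 2)) (a b : Fin 2) :
    #(cubeSumset (headSlice B b)) ≤ #{z ∈ cubeSumset B | z 0 = (a : ℕ) + b} :=
  card_le_card_of_injOn (Fin.cons (α := fun _ => ℕ) ((a : ℕ) + b))
    (fun z hz => by simp [cons_mem_cubeSumset a b hz])
    (Fin.cons_right_injective (α := fun _ => ℕ) _).injOn

/-- The fibre of `z ↦ z 0` over `1` contains a copy of the sumset of either head slice. -/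
lemma card_cubeSumset_headSlices_le (B : Finset (Fin (k + 1) → Fin 2)) :
    #(cubeSumset (headSlice B 0)) + max #(cubeSumset (headSlice B 0)) #(cubeSumset (headSlice B 1))
      + #(cubeSumset (headSlice B 1)) ≤ #(cubeSumset B) := by
  have hfibers := sum_card_fiberwise_eq_card_filter (cubeSumset B) (range 3) (· 0)
  simp only [sum_range_succ, sum_range_zero, zero_add] at hfibers
  have h0 := card_cubeSumset_headSlice_le B 0 0
  have h1 := card_cubeSumset_headSlice_le B 1 0
  have h1' := card_cubeSumset_headSlice_le B 0 1
  have h2 := card_cubeSumset_headSlice_le B 1 1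
  simp only [Fin.isValue, Fin.val_zero, Fin.val_one, add_zero, zero_add, Nat.reduceAdd]
    at h0 h1 h1' h2
  have := card_filter_le (cubeSumset B) (fun z => z 0 ∈ range 3)
  omega

theorem two_pow_mul_card_rpow_le_card_cubeSumset :
    ∀ {k : ℕ} (B : Finset (Fin k → Fin 2)), 2 ^ k * (#B : ℝ) ^ sumsetExp ≤ #(cubeSumset B)
  | 0, B => by
    have hB : #B ≤ 1 := by simpa using card_le_univ B
    have := card_le_card_cubeSumset B
    interval_cases #B
    · simp [zero_rpow sumsetExp_pos.ne']
    · simpa using this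
  | k + 1, B => by
    have h0 := two_pow_mul_card_rpow_le_card_cubeSumset (headSlice B 0)
    have h1 := two_pow_mul_card_rpow_le_card_cubeSumset (headSlice B 1)
    set x : ℝ := (#(headSlice B 0) : ℝ)
    set y : ℝ := (#(headSlice B 1) : ℝ)
    have hS : ((#(cubeSumset (headSlice B 0))
        + max #(cubeSumset (headSlice B 0)) #(cubeSumset (headSlice B 1))
        + #(cubeSumset (headSlice B 1)) : ℕ) : ℝ) ≤ #(cubeSumset B) := by
      exact_mod_cast card_cubeSumset_headSlices_le B
    push_cast at hS
    calc (2 : ℝ) ^ (k + 1) * (#B : ℝ) ^ sumsetExp = 2 ^ k * (2 * (x + y) ^ sumsetExp) := by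
          rw [card_eq_card_headSlice_add, Nat.cast_add, pow_succ]; ring
      _ ≤ 2 ^ k * (x ^ sumsetExp + max (x ^ sumsetExp) (y ^ sumsetExp) + y ^ sumsetExp) := by
          gcongr; exact two_mul_add_rpow_le_add_max (by positivity) (by positivity)
      _ = 2 ^ k * x ^ sumsetExp + max (2 ^ k * x ^ sumsetExp) (2 ^ k * y ^ sumsetExp)
          + 2 ^ k * y ^ sumsetExp := by
          rw [← mul_max_of_nonneg _ _ (by positivity)]; ring
      _ ≤ #(cubeSumset B) := le_trans (by gcongr) hS

end Sumset

section ChannelUses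

variable {k : ℕ} {φ1 : (Fin k → Fin 2) × (Fin k → Fin 2) → ℕ} {φ2 : (Fin k → Fin 2) → ℕ}

noncomputable def channelUses (φ1 : (Fin k → Fin 2) × (Fin k → Fin 2) → ℕ)
    (φ2 : (Fin k → Fin 2) → ℕ) : ℤ :=
  max ⌈logb 2 (imCard1 φ1) / 2⌉ ⌈logb 2 (imCard2 φ2)⌉

lemma rate0121_eq : rate0121 φ1 φ2 = k / channelUses φ1 φ2 := rfl

lemma imCard1_le_two_rpow : (imCard1 φ1 : ℝ) ≤ 2 ^ (2 * (channelUses φ1 φ2 : ℝ)) := by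
  have hpos : 0 < imCard1 φ1 := card_pos.2 (univ_nonempty.image φ1)
  rw [← logb_le_iff_le_rpow one_lt_two (by exact_mod_cast hpos), ← div_le_iff₀' two_pos]
  exact Int.ceil_le.1 (le_max_left _ _)

lemma imCard2_le_two_rpow : (imCard2 φ2 : ℝ) ≤ 2 ^ (channelUses φ1 φ2 : ℝ) := by
  have hpos : 0 < imCard2 φ2 := card_pos.2 (univ_nonempty.image φ2)
  rw [← logb_le_iff_le_rpow one_lt_two (by exact_mod_cast hpos)]
  exact Int.ceil_le.1 (le_max_right _ _)

lemma logb_two_le_of_le_two_pow {N j : ℕ} (h : N ≤ 2 ^ j) : logb 2 N ≤ j := by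
  rcases N.eq_zero_or_pos with rfl | hN
  · simp
  rw [logb_le_iff_le_rpow one_lt_two (by exact_mod_cast hN), rpow_natCast]
  exact_mod_cast h

lemma channelUses_le {n : ℕ} (h1 : imCard1 φ1 ≤ 2 ^ (2 * n)) (h2 : imCard2 φ2 ≤ 2 ^ n) :
    channelUses φ1 φ2 ≤ n := by
  refine max_le (Int.ceil_le.2 ?_) (Int.ceil_le.2 (logb_two_le_of_le_two_pow h2))
  rw [div_le_iff₀ two_pos]
  exact_mod_cast (logb_two_le_of_le_two_pow h1).trans_eq (by push_cast; ring)

end ChannelUses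

section Converse

variable {k : ℕ} {φ1 : (Fin k → Fin 2) × (Fin k → Fin 2) → ℕ} {φ2 : (Fin k → Fin 2) → ℕ}

lemma exists_two_pow_le_imCard2_mul_card_fiber (φ2 : (Fin k → Fin 2) → ℕ) :
    ∃ t, (2 : ℝ) ^ k ≤ imCard2 φ2 * #{y | φ2 y = t} := by
  have hpos : (0 : ℝ) < imCard2 φ2 := by exact_mod_cast card_pos.2 (univ_nonempty.image φ2)
  obtain ⟨t, -, ht⟩ := exists_le_card_fiber_of_nsmul_le_card_of_maps_to (s := univ)
    (b := (2 : ℝ) ^ k / imCard2 φ2)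
    (fun y _ => mem_image_of_mem φ2 (mem_univ y)) (univ_nonempty.image φ2)
    (by rw [nsmul_eq_mul, ← imCard2, mul_div_cancel₀ _ hpos.ne', card_univ]; simp)
  exact ⟨t, (div_le_iff₀' hpos).1 ht⟩

lemma card_cubeSumset_fiber_le_imCard1 (hadm : Admissible01 φ1 φ2) (t : ℕ) :
    #(cubeSumset {y | φ2 y = t}) ≤ imCard1 φ1 := by
  obtain ⟨ψ, hψ⟩ := hadm
  have hsub : cubeSumset {y | φ2 y = t} ⊆ (univ.image φ1).image (ψ · t) := by
    intro z hz
    obtain ⟨x, y, hy, rfl⟩ := mem_cubeSumset.1 hz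
    rw [mem_filter] at hy
    exact mem_image.2 ⟨φ1 (x, y), mem_image_of_mem φ1 (mem_univ _), hy.2 ▸ hψ x y⟩
  exact (card_le_card hsub).trans card_image_le

lemma logb_two_three_mul_logb_three_six : logb 2 3 * logb 3 6 = 1 + logb 2 3 := by
  rw [mul_logb (by norm_num) (by norm_num) (by norm_num), show (6 : ℝ) = 2 * 3 by norm_num,
    logb_mul two_ne_zero three_ne_zero, logb_self_eq_one one_lt_two]

theorem natCast_le_logb_three_six_mul_channelUses (hadm : Admissible01 φ1 φ2) :
    (k : ℝ) ≤ logb 3 6 * channelUses φ1 φ2 := by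
  set n : ℝ := (channelUses φ1 φ2 : ℝ)
  obtain ⟨t, ht⟩ := exists_two_pow_le_imCard2_mul_card_fiber φ2
  set B : Finset (Fin k → Fin 2) := {y | φ2 y = t}
  have hB : (2 : ℝ) ^ ((k : ℝ) - n) ≤ #B := by
    rw [rpow_sub two_pos, rpow_natCast, div_le_iff₀' (by positivity)]
    exact ht.trans (mul_le_mul_of_nonneg_right imCard2_le_two_rpow (Nat.cast_nonneg _))
  have hpow : (2 : ℝ) ^ (k + (k - n) * sumsetExp) ≤ 2 ^ (2 * n) := calc
    (2 : ℝ) ^ (k + (k - n) * sumsetExp) = 2 ^ k * (2 ^ ((k : ℝ) - n)) ^ sumsetExp := by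
      rw [rpow_add two_pos, rpow_mul zero_le_two, rpow_natCast]
    _ ≤ 2 ^ k * (#B : ℝ) ^ sumsetExp := by gcongr; exact sumsetExp_pos.le
    _ ≤ #(cubeSumset B) := two_pow_mul_card_rpow_le_card_cubeSumset B
    _ ≤ imCard1 φ1 := by exact_mod_cast card_cubeSumset_fiber_le_imCard1 hadm t
    _ ≤ 2 ^ (2 * n) := imCard1_le_two_rpow
  have hexp := (rpow_le_rpow_left_iff one_lt_two).1 hpow
  refine le_of_mul_le_mul_left ?_ (logb_pos one_lt_two (by norm_num) : 0 < logb 2 3)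
  rw [← mul_assoc, logb_two_three_mul_logb_three_six]
  rw [sumsetExp] at hexp
  linarith

lemma channelUses_pos (hk : 0 < k) (hadm : Admissible01 φ1 φ2) :
    (0 : ℝ) < channelUses φ1 φ2 := by
  have hk' : (0 : ℝ) < k := by exact_mod_cast hk
  exact pos_of_mul_pos_right (hk'.trans_le (natCast_le_logb_three_six_mul_channelUses hadm))
    (logb_pos (by norm_num) (by norm_num)).le

theorem rate0121_le_logb_three_six (hk : 0 < k) (hadm : Admissible01 φ1 φ2) :
    rate0121 φ1 φ2 ≤ logb 3 6 := by
  rw [rate0121_eq, div_le_iff₀ (channelUses_pos hk hadm)]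
  exact natCast_le_logb_three_six_mul_channelUses hadm

end Converse

section Achievability

lemma admissible01_of_forall {k : ℕ} {φ1 : (Fin k → Fin 2) × (Fin k → Fin 2) → ℕ}
    {φ2 : (Fin k → Fin 2) → ℕ}
    (h : ∀ x y x' y', φ1 (x, y) = φ1 (x', y') → φ2 y = φ2 y' → vsum x y = vsum x' y') :
    Admissible01 φ1 φ2 := by
  classical
  refine ⟨fun a b => if hab : ∃ p : (Fin k → Fin 2) × (Fin k → Fin 2), φ1 p = a ∧ φ2 p.2 = b
    then vsum hab.choose.1 hab.choose.2 else 0, fun x y => ?_⟩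
  have hxy : ∃ p : (Fin k → Fin 2) × (Fin k → Fin 2), φ1 p = φ1 (x, y) ∧ φ2 p.2 = φ2 y :=
    ⟨(x, y), rfl, rfl⟩
  dsimp only
  rw [dif_pos hxy]
  exact h _ _ x y hxy.choose_spec.1 hxy.choose_spec.2

lemma card_image_comp_le {α β γ : Type*} [Fintype α] [Fintype β] [DecidableEq β] [DecidableEq γ]
    (f : α → β) (g : β → γ) : #(univ.image (g ∘ f)) ≤ Fintype.card β := by
  rw [← image_image]
  exact card_image_le.trans (card_le_univ _)

lemma vsum_lt_three {k : ℕ} (x y : Fin k → Fin 2) (i : Fin k) : vsum x y i < 3 := by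
  have := (x i).isLt
  have := (y i).isLt
  simp only [vsum]
  omega

variable {n l : ℕ}

def tailSums (x y : Fin (n + l) → Fin 2) : Fin l → Fin 3 :=
  fun j => ⟨vsum x y (Fin.natAdd n j), vsum_lt_three x y _⟩

theorem exists_admissible01_div_le_rate0121 (hn : 0 < n) (h : 3 ^ l ≤ 2 ^ n) :
    ∃ (φ1 : (Fin (n + l) → Fin 2) × (Fin (n + l) → Fin 2) → ℕ) (φ2 : (Fin (n + l) → Fin 2) → ℕ),
      Admissible01 φ1 φ2 ∧ ((n + l : ℕ) : ℝ) / n ≤ rate0121 φ1 φ2 := by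
  obtain ⟨g1, hg1⟩ := Countable.exists_injective_nat ((Fin n → Fin 2) × (Fin l → Fin 3))
  obtain ⟨g2, hg2⟩ := Countable.exists_injective_nat (Fin n → Fin 2)
  set φ1 := fun p : (Fin (n + l) → Fin 2) × (Fin (n + l) → Fin 2) =>
    g1 (p.1 ∘ Fin.castAdd l, tailSums p.1 p.2)
  set φ2 := fun y : Fin (n + l) → Fin 2 => g2 (y ∘ Fin.castAdd l)
  have hadm : Admissible01 φ1 φ2 := by
    refine admissible01_of_forall fun x y x' y' h1 h2 => ?_
    obtain ⟨hx, hs⟩ : x ∘ Fin.castAdd l = x' ∘ Fin.castAdd l ∧ tailSums x y = tailSums x' y' :=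
      Prod.ext_iff.1 (hg1 h1)
    have hy : y ∘ Fin.castAdd l = y' ∘ Fin.castAdd l := hg2 h2
    funext i
    refine Fin.addCases (fun i => ?_) (fun j => ?_) i
    · exact congrArg₂ (fun a b : Fin 2 => (a : ℕ) + b) (congrFun hx i) (congrFun hy i)
    · exact congrArg Fin.val (congrFun hs j)
  have h1 : imCard1 φ1 ≤ 2 ^ (2 * n) := calc
    imCard1 φ1 ≤ Fintype.card ((Fin n → Fin 2) × (Fin l → Fin 3)) := card_image_comp_le _ g1
    _ = 2 ^ n * 3 ^ l := by simp
    _ ≤ 2 ^ (2 * n) := by rw [two_mul, pow_add]; gcongr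
  have h2 : imCard2 φ2 ≤ 2 ^ n := calc
    imCard2 φ2 ≤ Fintype.card (Fin n → Fin 2) := card_image_comp_le _ g2
    _ = 2 ^ n := by simp
  refine ⟨φ1, φ2, hadm, ?_⟩
  rw [rate0121_eq]
  have hpos := channelUses_pos (by omega) hadm
  gcongr
  exact_mod_cast channelUses_le h1 h2

lemma exists_lt_natCast_add_div {w : ℝ} (hw : w < logb 3 6) :
    ∃ n l : ℕ, 0 < n ∧ 3 ^ l ≤ 2 ^ n ∧ w < ((n + l : ℕ) : ℝ) / n := by
  obtain ⟨N, hN⟩ := exists_nat_one_div_lt (sub_pos.2 hw)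
  set l := Nat.log 3 (2 ^ (N + 1))
  refine ⟨N + 1, l, N.succ_pos, Nat.pow_log_le_self 3 (pow_ne_zero _ two_ne_zero), ?_⟩
  have hlt : (2 : ℝ) ^ (N + 1) < 3 ^ ((l + 1 : ℕ) : ℝ) := by
    rw [rpow_natCast]; exact_mod_cast Nat.lt_pow_succ_log_self (by norm_num) (2 ^ (N + 1))
  rw [← logb_lt_iff_lt_rpow (by norm_num) (by positivity), logb_pow] at hlt
  have h6 : logb 3 6 = 1 + logb 3 2 := by
    rw [show (6 : ℝ) = 3 * 2 by norm_num, logb_mul three_ne_zero two_ne_zero,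
      logb_self_eq_one (by norm_num)]
  rw [div_lt_iff₀ (by positivity), h6] at hN
  push_cast at hlt ⊢
  rw [lt_div_iff₀ (by positivity)]
  linarith

end Achievability

theorem capacity_01_2_1 :
    sSup {r : ℝ | ∃ (k : ℕ), 0 < k ∧ ∃ (φ1 : (Fin k → Fin 2) × (Fin k → Fin 2) → ℕ)
      (φ2 : (Fin k → Fin 2) → ℕ),
      Admissible01 φ1 φ2 ∧ r = rate0121 φ1 φ2} = Real.logb 3 6 := by
  refine csSup_eq_of_forall_le_of_forall_lt_exists_gt ?_ ?_ fun w hw => ?_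
  · obtain ⟨φ1, φ2, hadm, -⟩ :=
      exists_admissible01_div_le_rate0121 (n := 1) (l := 0) one_pos (by norm_num)
    exact ⟨_, 1, one_pos, φ1, φ2, hadm, rfl⟩
  · rintro r ⟨k, hk, φ1, φ2, hadm, rfl⟩
    exact rate0121_le_logb_three_six hk hadm
  · obtain ⟨n, l, hn, hnl, hw⟩ := exists_lt_natCast_add_div hw
    obtain ⟨φ1, φ2, hadm, hrate⟩ := exists_admissible01_div_le_rate0121 hn hnl
    exact ⟨_, ⟨n + l, by omega, φ1, φ2, hadm, rfl⟩, hw.trans_le hrate⟩
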